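/- arXiv:2308.15187 — 5 statements merged into one kernel-verified Lean document; each statement's English description precedes it below -/
import Mathlib

section
/- If Δ is an n-dimensional reflexive polytope with respect to the lattice ℤⁿ, then its dual Δ* = {y ∈ ℝⁿ : ⟨x, y⟩ ≥ −1 for all x ∈ Δ} is again an n-dimensional reflexive polytope with respect to ℤⁿ: Δ* is the convex hull of finitely many points of ℤⁿ, contains 0 in its interior, and every facet of Δ* is contained in a hyperplane {y ∈ ℝⁿ : ⟨p, y⟩ = −1} for some p ∈ ℤⁿ (in fact for a vertex p of Δ). -/
open Finset

/-- The standard dot product on `Fin n → ℝ`. -/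
def dotp {n : ℕ} (x y : Fin n → ℝ) : ℝ := ∑ i, x i * y i

/-- A point of `ℝⁿ` all of whose coordinates are integers. -/
def IsLatticePoint {n : ℕ} (x : Fin n → ℝ) : Prop := ∀ i, ∃ m : ℤ, x i = (m : ℝ)

/-- A lattice polytope: the convex hull of finitely many lattice points. -/
def IsLatticePolytope {n : ℕ} (Δ : Set (Fin n → ℝ)) : Prop :=
  ∃ V : Set (Fin n → ℝ), V.Finite ∧ (∀ v ∈ V, IsLatticePoint v) ∧ Δ = convexHull ℝ V

/-- A (nonempty) face of a convex set `Δ`, cut out by a supporting hyperplane. -/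
def IsFaceOf {n : ℕ} (F Δ : Set (Fin n → ℝ)) : Prop :=
  F.Nonempty ∧ ∃ u : Fin n → ℝ, ∃ c : ℝ,
    (∀ x ∈ Δ, dotp x u ≤ c) ∧ F = {x ∈ Δ | dotp x u = c}

/-- The dimension of a subset of `ℝⁿ`: the dimension of its affine span. -/
noncomputable def faceDim {n : ℕ} (F : Set (Fin n → ℝ)) : ℕ :=
  Module.finrank ℝ ↥(vectorSpan ℝ F)

/-- A reflexive polytope with respect to the lattice `ℤⁿ`: a lattice polytope with `0` in its
interior, each of whose facets lies on a hyperplane `{x | ⟨x, l⟩ = -1}` with `l ∈ ℤⁿ`. -/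
def IsReflexive {n : ℕ} (Δ : Set (Fin n → ℝ)) : Prop :=
  IsLatticePolytope Δ ∧ (0 : Fin n → ℝ) ∈ interior Δ ∧
    ∀ F : Set (Fin n → ℝ), IsFaceOf F Δ → faceDim F + 1 = n →
      ∃ l : Fin n → ℤ, F ⊆ {x | dotp x (fun i => (l i : ℝ)) = -1}

/-- The dual (polar) set `Δ* = {y | ⟨x, y⟩ ≥ -1 for all x ∈ Δ}`. -/
def dualSet {n : ℕ} (Δ : Set (Fin n → ℝ)) : Set (Fin n → ℝ) :=
  {y | ∀ x ∈ Δ, -1 ≤ dotp x y}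

/-- The face of `Δ*` dual to a face `Θ` of `Δ`. -/
def dualFace {n : ℕ} (Δ Θ : Set (Fin n → ℝ)) : Set (Fin n → ℝ) :=
  {y ∈ dualSet Δ | ∀ x ∈ Θ, dotp x y = -1}

section DotpBasics

variable {n : ℕ}

lemma dotp_comm (x y : Fin n → ℝ) : dotp x y = dotp y x := by
  simp [dotp, mul_comm]

lemma dotp_zero_right (x : Fin n → ℝ) : dotp x 0 = 0 := by simp [dotp]

lemma dotp_add_right (x y z : Fin n → ℝ) : dotp x (y + z) = dotp x y + dotp x z := by
  simp [dotp, mul_add, Finset.sum_add_distrib]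

lemma dotp_smul_right (t : ℝ) (x y : Fin n → ℝ) : dotp x (t • y) = t * dotp x y := by
  simp [dotp, Finset.mul_sum, mul_left_comm]

lemma dotp_neg_right (x y : Fin n → ℝ) : dotp x (-y) = -dotp x y := by
  simp [dotp, Finset.sum_neg_distrib]

lemma dotp_sub_right (x y z : Fin n → ℝ) : dotp x (y - z) = dotp x y - dotp x z := by
  simp [dotp, mul_sub, Finset.sum_sub_distrib]

lemma dotp_add_left (x y z : Fin n → ℝ) : dotp (x + y) z = dotp x z + dotp y z := by
  simp [dotp, add_mul, Finset.sum_add_distrib]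

lemma dotp_smul_left (t : ℝ) (x y : Fin n → ℝ) : dotp (t • x) y = t * dotp x y := by
  simp [dotp, Finset.mul_sum, mul_assoc]

lemma dotp_single_left (i : Fin n) (s : ℝ) (y : Fin n → ℝ) :
    dotp (Pi.single i s) y = s * y i := by
  simp [dotp, Pi.single_apply, ite_mul]

lemma dotp_sum_right {α : Type*} (s : Finset α) (x : Fin n → ℝ) (f : α → Fin n → ℝ) :
    dotp x (∑ v ∈ s, f v) = ∑ v ∈ s, dotp x (f v) := by
  simp only [dotp, Finset.sum_apply, Finset.mul_sum]
  exact Finset.sum_comm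

lemma dotp_self_pos {u : Fin n → ℝ} (hu : u ≠ 0) : 0 < dotp u u := by
  obtain ⟨i, hi⟩ := Function.ne_iff.mp hu
  refine Finset.sum_pos' (fun j _ => mul_self_nonneg _) ⟨i, Finset.mem_univ i, ?_⟩
  exact mul_self_pos.mpr hi

lemma abs_dotp_le (x y : Fin n → ℝ) : |dotp x y| ≤ n * (‖x‖ * ‖y‖) := by
  have h1 : |dotp x y| ≤ ∑ i, |x i * y i| := Finset.abs_sum_le_sum_abs _ _
  have h2 : ∀ i ∈ Finset.univ, |x i * y i| ≤ ‖x‖ * ‖y‖ := by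
    intro i _
    rw [abs_mul]
    exact mul_le_mul (by simpa using norm_le_pi_norm x i)
      (by simpa using norm_le_pi_norm y i) (abs_nonneg _) (norm_nonneg _)
  calc |dotp x y| ≤ ∑ _i : Fin n, ‖x‖ * ‖y‖ := h1.trans (Finset.sum_le_sum h2)
    _ = n * (‖x‖ * ‖y‖) := by simp [Finset.sum_const, nsmul_eq_mul]

lemma pi_repr (x : Fin n → ℝ) : x = ∑ i, x i • (Pi.single i 1 : Fin n → ℝ) := by
  ext j
  simp [Finset.sum_apply, Pi.single_apply]

lemma continuous_dotp_right (x : Fin n → ℝ) : Continuous fun y : Fin n → ℝ => dotp x y := by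
  unfold dotp
  exact continuous_finset_sum _ fun i _ => (continuous_const.mul (continuous_apply i))

/-- `dotp · y` as a linear map. -/
def dotpL (y : Fin n → ℝ) : (Fin n → ℝ) →ₗ[ℝ] ℝ where
  toFun x := dotp x y
  map_add' a b := dotp_add_left a b y
  map_smul' t a := by simpa using dotp_smul_left t a y

@[simp] lemma dotpL_apply (y x : Fin n → ℝ) : dotpL y x = dotp x y := rfl

lemma convex_dotp_ge (a : ℝ) (y : Fin n → ℝ) : Convex ℝ {x : Fin n → ℝ | a ≤ dotp x y} := by
  intro p hp q hq s t hs ht hst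
  simp only [Set.mem_setOf_eq] at *
  have : dotp (s • p + t • q) y = s * dotp p y + t * dotp q y := by
    rw [dotp_add_left, dotp_smul_left, dotp_smul_left]
  rw [this]
  calc a = s * a + t * a := by rw [← add_mul, hst, one_mul]
    _ ≤ s * dotp p y + t * dotp q y :=
      add_le_add (mul_le_mul_of_nonneg_left hp hs) (mul_le_mul_of_nonneg_left hq ht)

lemma convex_dotp_eq (u : Fin n → ℝ) (c : ℝ) : Convex ℝ {x : Fin n → ℝ | dotp x u = c} := by
  intro p hp q hq s t hs ht hst
  simp only [Set.mem_setOf_eq] at *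
  rw [dotp_add_left, dotp_smul_left, dotp_smul_left, hp, hq, ← add_mul, hst, one_mul]

end DotpBasics

section DualBasics

variable {n : ℕ}

lemma convex_dualSet (Δ : Set (Fin n → ℝ)) : Convex ℝ (dualSet Δ) := by
  intro p hp q hq s t hs ht hst x hx
  have heq : dotp x (s • p + t • q) = s * dotp x p + t * dotp x q := by
    rw [dotp_add_right, dotp_smul_right, dotp_smul_right]
  show (-1 : ℝ) ≤ dotp x (s • p + t • q)
  rw [heq]
  nlinarith [hp x hx, hq x hx]

lemma isClosed_dualSet (Δ : Set (Fin n → ℝ)) : IsClosed (dualSet Δ) := by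
  have h : dualSet Δ = ⋂ x ∈ Δ, {y | -1 ≤ dotp x y} := by
    ext y; simp [dualSet]
  rw [h]
  exact isClosed_biInter fun x _ => isClosed_le continuous_const (continuous_dotp_right x)

lemma mem_dualSet_hull {V : Set (Fin n → ℝ)} {y : Fin n → ℝ}
    (h : ∀ v ∈ V, -1 ≤ dotp v y) : y ∈ dualSet (convexHull ℝ V) := by
  intro x hx
  exact convexHull_min h (convex_dotp_ge (-1) y) hx

lemma norm_le_of_mem_dualSet {Δ : Set (Fin n → ℝ)} {ε : ℝ} (hε : 0 < ε)
    (hb : Metric.ball (0 : Fin n → ℝ) ε ⊆ Δ) {y : Fin n → ℝ} (hy : y ∈ dualSet Δ) :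
    ‖y‖ ≤ 2 / ε := by
  rw [pi_norm_le_iff_of_nonneg (by positivity)]
  intro i
  set s : ℝ := if 0 ≤ y i then -(ε/2) else ε/2 with hs
  have hsabs : |s| = ε / 2 := by
    rw [hs]; split_ifs
    · rw [abs_neg, abs_of_pos (by linarith)]
    · rw [abs_of_pos (by linarith)]
  have hmem : (Pi.single i s : Fin n → ℝ) ∈ Metric.ball (0 : Fin n → ℝ) ε := by
    rw [Metric.mem_ball, dist_zero_right]
    have h2 : ‖(Pi.single i s : Fin n → ℝ)‖ ≤ |s| := by
      rw [pi_norm_le_iff_of_nonneg (abs_nonneg s)]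
      intro j
      rcases eq_or_ne j i with rfl | hne
      · simp
      · rw [Pi.single_eq_of_ne hne]
        simp [abs_nonneg]
    calc ‖(Pi.single i s : Fin n → ℝ)‖ ≤ |s| := h2
      _ = ε / 2 := hsabs
      _ < ε := by linarith
  have h1 := hy _ (hb hmem)
  rw [dotp_single_left] at h1
  rw [Real.norm_eq_abs]
  rcases le_or_gt 0 (y i) with h | h
  · rw [abs_of_nonneg h]
    have hse : s = -(ε/2) := if_pos h
    rw [hse] at h1
    rw [le_div_iff₀ hε]
    nlinarith
  · rw [abs_of_neg h]
    have hse : s = ε/2 := if_neg (not_le.mpr h)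
    rw [hse] at h1
    rw [le_div_iff₀ hε]
    nlinarith

lemma ball_subset_dualSet {Δ : Set (Fin n → ℝ)} (hn : 0 < n) {R : ℝ} (hR : 0 < R)
    (hΔR : ∀ x ∈ Δ, ‖x‖ ≤ R) :
    Metric.ball (0 : Fin n → ℝ) (1 / (n * R)) ⊆ dualSet Δ := by
  intro y hy x hx
  rw [Metric.mem_ball, dist_zero_right] at hy
  have hn' : (0:ℝ) < n := by exact_mod_cast hn
  have h1 : |dotp x y| ≤ n * (‖x‖ * ‖y‖) := abs_dotp_le x y
  have h2 : (n:ℝ) * (‖x‖ * ‖y‖) ≤ n * (R * ‖y‖) :=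
    mul_le_mul_of_nonneg_left (mul_le_mul_of_nonneg_right (hΔR x hx) (norm_nonneg y)) hn'.le
  have h3 : (n:ℝ) * (R * ‖y‖) < n * (R * (1 / (n * R))) :=
    mul_lt_mul_of_pos_left (mul_lt_mul_of_pos_left hy hR) hn'
  have h4 : (n:ℝ) * (R * (1 / (n * R))) = 1 := by field_simp
  have h5 := neg_abs_le (dotp x y)
  linarith

lemma vectorSpan_eq_top_of_ball {S : Set (Fin n → ℝ)} {d : ℝ} (hd : 0 < d)
    (hS : Metric.ball (0 : Fin n → ℝ) d ⊆ S) : vectorSpan ℝ S = ⊤ := by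
  have h0 : (0 : Fin n → ℝ) ∈ S := hS (Metric.mem_ball_self hd)
  have hsingle : ∀ i : Fin n, (Pi.single i 1 : Fin n → ℝ) ∈ vectorSpan ℝ S := by
    intro i
    have hone : ‖(Pi.single i 1 : Fin n → ℝ)‖ ≤ 1 := by
      rw [pi_norm_le_iff_of_nonneg zero_le_one]
      intro j
      rcases eq_or_ne j i with rfl | hne
      · simp
      · rw [Pi.single_eq_of_ne hne]; simp
    have hmem : ((d/2) • (Pi.single i 1 : Fin n → ℝ)) ∈ S := by
      apply hS
      rw [Metric.mem_ball, dist_zero_right, norm_smul, Real.norm_eq_abs,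
        abs_of_pos (by linarith : (0:ℝ) < d/2)]
      nlinarith [norm_nonneg (Pi.single i 1 : Fin n → ℝ)]
    have h1 : ((d/2) • (Pi.single i 1 : Fin n → ℝ)) - 0 ∈ vectorSpan ℝ S := by
      have := vsub_mem_vectorSpan ℝ hmem h0
      simpa using this
    rw [sub_zero] at h1
    have h2 := Submodule.smul_mem (vectorSpan ℝ S) (2/d) h1
    have h3 : (2/d : ℝ) * (d/2) = 1 := by field_simp
    rwa [smul_smul, h3, one_smul] at h2
  rw [eq_top_iff]
  intro x _
  rw [show x = ∑ i, x i • (Pi.single i 1 : Fin n → ℝ) from pi_repr x]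
  exact Submodule.sum_mem _ fun i _ => Submodule.smul_mem _ _ (hsingle i)

lemma finite_lattice_of_norm_le (r : ℝ) :
    {y : Fin n → ℝ | IsLatticePoint y ∧ ‖y‖ ≤ r}.Finite := by
  have hT : ∀ _i : Fin n, (Set.Icc (-r) r ∩ Set.range (Int.cast : ℤ → ℝ)).Finite := by
    intro i
    have hsub : (Set.Icc (-r) r ∩ Set.range (Int.cast : ℤ → ℝ)) ⊆
        (fun m : ℤ => (m : ℝ)) '' (Set.Icc ⌈-r⌉ ⌊r⌋) := by
      rintro x ⟨⟨h1, h2⟩, m, rfl⟩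
      exact ⟨m, ⟨Int.ceil_le.mpr h1, Int.le_floor.mpr h2⟩, rfl⟩
    exact ((Set.finite_Icc _ _).image _).subset hsub
  have hfin := Set.Finite.pi'
    (t := fun _ : Fin n => Set.Icc (-r) r ∩ Set.range (Int.cast : ℤ → ℝ)) hT
  apply hfin.subset
  rintro y ⟨hlat, hnorm⟩ i
  obtain ⟨m, hm⟩ := hlat i
  have h1 : |y i| ≤ r := by
    have h2 := norm_le_pi_norm y i
    rw [Real.norm_eq_abs] at h2
    linarith
  obtain ⟨h3, h4⟩ := abs_le.mp h1
  exact ⟨Set.mem_Icc.mpr ⟨h3, h4⟩, ⟨m, hm.symm⟩⟩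

end DualBasics

lemma extreme_lattice {n : ℕ} (hn : 0 < n) {V Δ : Set (Fin n → ℝ)} (hVfin : V.Finite)
    (hΔeq : Δ = convexHull ℝ V)
    (hfacet : ∀ F : Set (Fin n → ℝ), IsFaceOf F Δ → faceDim F + 1 = n →
      ∃ l : Fin n → ℤ, F ⊆ {x | dotp x (fun i => (l i : ℝ)) = -1})
    {y : Fin n → ℝ} (hy : y ∈ (dualSet Δ).extremePoints ℝ) :
    IsLatticePoint y := by
  subst hΔeq
  set Δ : Set (Fin n → ℝ) := convexHull ℝ V with hΔ
  have hyD : y ∈ dualSet Δ := hy.1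
  have hVD : ∀ v ∈ V, -1 ≤ dotp v y := fun v hv => hyD v (subset_convexHull ℝ V hv)
  set Vm : Set (Fin n → ℝ) := {v ∈ V | dotp v y = -1} with hVm
  -- span of Vm is everything
  have hspan : Submodule.span ℝ Vm = ⊤ := by
    by_contra hne
    obtain ⟨f, hf0, hfmap⟩ := Submodule.exists_dual_map_eq_bot_of_lt_top
      (lt_top_iff_ne_top.mpr hne) inferInstance
    have hfVm : ∀ v ∈ Vm, f v = 0 := by
      intro v hv
      have h1 : f v ∈ (Submodule.span ℝ Vm).map f :=
        Submodule.mem_map_of_mem (Submodule.subset_span hv)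
      rw [hfmap] at h1
      simpa using h1
    set w : Fin n → ℝ := fun i => f (Pi.single i 1) with hw
    have hfw : ∀ x, f x = dotp x w := by
      intro x
      conv_lhs => rw [show x = ∑ i, x i • (Pi.single i 1 : Fin n → ℝ) from pi_repr x]
      rw [map_sum]
      simp only [map_smul, smul_eq_mul]
      rfl
    have hwne : w ≠ 0 := by
      intro h0
      apply hf0
      apply LinearMap.ext
      intro x
      rw [hfw x, h0, dotp_zero_right]
      rfl
    have hVgt : ∀ v ∈ V, dotp v w ≠ 0 → -1 < dotp v y := by
      intro v hv hvw
      rcases lt_or_eq_of_le (hVD v hv) with hlt | heq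
      · exact hlt
      · exact absurd (((hfw v).symm).trans (hfVm v ⟨hv, heq.symm⟩)) hvw
    -- exists a uniform small t
    obtain ⟨t, ht0, ht⟩ : ∃ t : ℝ, 0 < t ∧ ∀ v ∈ V, t * |dotp v w| ≤ 1 + dotp v y := by
      rcases Set.eq_empty_or_nonempty V with hVe | hVne
      · exact ⟨1, one_pos, fun v hv => absurd hv (hVe ▸ Set.notMem_empty v)⟩
      · set q : (Fin n → ℝ) → ℝ :=
          fun v => if dotp v w = 0 then 1 else (1 + dotp v y) / |dotp v w| with hq
        have hVne' : hVfin.toFinset.Nonempty := by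
          rwa [Set.Finite.toFinset_nonempty]
        have hqpos : ∀ v ∈ V, 0 < q v := by
          intro v hv
          by_cases h0 : dotp v w = 0
          · simp [hq, h0]
          · have h1 := hVgt v hv h0
            have habs : (0:ℝ) < |dotp v w| := abs_pos.mpr h0
            simp only [hq, if_neg h0]
            apply div_pos (by linarith) habs
        refine ⟨hVfin.toFinset.inf' hVne' q, ?_, ?_⟩
        · rw [Finset.lt_inf'_iff]
          intro v hv
          exact hqpos v (hVfin.mem_toFinset.mp hv)
        · intro v hv
          have hle : hVfin.toFinset.inf' hVne' q ≤ q v :=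
            Finset.inf'_le _ (hVfin.mem_toFinset.mpr hv)
          by_cases h0 : dotp v w = 0
          · rw [h0, abs_zero, mul_zero]
            linarith [hVD v hv]
          · have habs : (0:ℝ) < |dotp v w| := abs_pos.mpr h0
            calc hVfin.toFinset.inf' hVne' q * |dotp v w|
                ≤ q v * |dotp v w| := mul_le_mul_of_nonneg_right hle habs.le
              _ = 1 + dotp v y := by
                  simp only [hq, if_neg h0]
                  exact div_mul_cancel₀ _ (ne_of_gt habs)
    -- both small perturbations stay in the dual
    have hmem : ∀ s : ℝ, |s| ≤ t → y + s • w ∈ dualSet Δ := by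
      intro s hs
      rw [hΔ]
      apply mem_dualSet_hull
      intro v hv
      have h1 : dotp v (y + s • w) = dotp v y + s * dotp v w := by
        rw [dotp_add_right, dotp_smul_right]
      have h2 : |s * dotp v w| ≤ t * |dotp v w| := by
        rw [abs_mul]
        exact mul_le_mul_of_nonneg_right hs (abs_nonneg _)
      have h3 := ht v hv
      have h4 := neg_abs_le (s * dotp v w)
      rw [h1]
      linarith
    have h1 := hmem t (by rw [abs_of_pos ht0])
    have h2 := hmem (-t) (by rw [abs_neg, abs_of_pos ht0])
    have hseg : y ∈ openSegment ℝ (y + (-t) • w) (y + t • w) := by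
      refine ⟨1/2, 1/2, by norm_num, by norm_num, by norm_num, ?_⟩
      module
    have h5 := hy.2 h1 h2 (by rwa [openSegment_symm])
    have h6 : t • w = 0 := by
      have := congrArg (fun z => z - y) h5
      simpa [add_sub_cancel_left] using this
    rcases smul_eq_zero.mp h6 with h | h
    · exact absurd h (ne_of_gt ht0)
    · exact absurd h hwne
  -- now use the span to identify a facet
  haveI : Nontrivial (Fin n → ℝ) := by
    refine ⟨Pi.single ⟨0, hn⟩ 1, 0, ?_⟩
    intro hcon
    have := congrFun hcon ⟨0, hn⟩
    simp at this
  obtain ⟨v₀, hv₀⟩ : Vm.Nonempty := by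
    rcases Set.eq_empty_or_nonempty Vm with he | hne
    · rw [he, Submodule.span_empty] at hspan
      exact absurd hspan bot_ne_top
    · exact hne
  have hv₀y : dotp v₀ y = -1 := hv₀.2
  set F : Set (Fin n → ℝ) := {x ∈ Δ | dotp x (-y) = 1} with hF
  have hVmF : Vm ⊆ F := by
    intro v hv
    exact ⟨subset_convexHull ℝ V hv.1, by rw [dotp_neg_right, hv.2]; norm_num⟩
  have hFface : IsFaceOf F Δ := by
    refine ⟨⟨v₀, hVmF hv₀⟩, -y, 1, fun x hx => ?_, rfl⟩
    rw [dotp_neg_right]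
    linarith [hyD x hx]
  have hFy : ∀ x ∈ F, dotp x y = -1 := by
    intro x hx
    have := hx.2
    rw [dotp_neg_right] at this
    linarith
  -- dimension count
  set fy : (Fin n → ℝ) →ₗ[ℝ] ℝ := dotpL y with hfy
  have hrange : LinearMap.range fy = ⊤ := by
    rw [eq_top_iff]
    rintro r -
    refine ⟨(-r) • v₀, ?_⟩
    rw [hfy, dotpL_apply, dotp_smul_left, hv₀y]
    ring
  have hkerrank : Module.finrank ℝ (LinearMap.ker fy) + 1 = n := by
    have hh := LinearMap.finrank_range_add_finrank_ker fy
    rw [hrange, finrank_top, Module.finrank_self, Module.finrank_fin_fun] at hh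
    omega
  have hWle : vectorSpan ℝ F ≤ LinearMap.ker fy := by
    rw [vectorSpan_def, Submodule.span_le]
    rintro z ⟨a, ha, b, hb, rfl⟩
    have hz : fy (a -ᵥ b) = 0 := by
      rw [vsub_eq_sub, map_sub, hfy, dotpL_apply, dotpL_apply, hFy a ha, hFy b hb]
      ring
    exact hz
  have hv₀ne : v₀ ≠ 0 := by
    intro h0
    rw [h0, dotp_comm, dotp_zero_right] at hv₀y
    norm_num at hv₀y
  have hsup : (⊤ : Submodule ℝ (Fin n → ℝ)) ≤ Submodule.span ℝ {v₀} ⊔ vectorSpan ℝ F := by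
    rw [← hspan, Submodule.span_le]
    intro v hv
    have hd : v - v₀ ∈ vectorSpan ℝ F := by
      have := vsub_mem_vectorSpan ℝ (hVmF hv) (hVmF hv₀)
      simpa using this
    have hrw : v = v₀ + (v - v₀) := by ring
    rw [hrw]
    exact Submodule.add_mem _
      (Submodule.mem_sup_left (Submodule.mem_span_singleton_self v₀))
      (Submodule.mem_sup_right hd)
  have hlow : n ≤ 1 + Module.finrank ℝ (vectorSpan ℝ F) := by
    have h1 : Module.finrank ℝ (⊤ : Submodule ℝ (Fin n → ℝ)) ≤
        Module.finrank ℝ ↥(Submodule.span ℝ {v₀} ⊔ vectorSpan ℝ F) :=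
      Submodule.finrank_mono hsup
    have h2 := Submodule.finrank_sup_add_finrank_inf_eq (Submodule.span ℝ {v₀}) (vectorSpan ℝ F)
    have h3 : Module.finrank ℝ (Submodule.span ℝ ({v₀} : Set (Fin n → ℝ))) = 1 :=
      finrank_span_singleton hv₀ne
    rw [finrank_top, Module.finrank_fin_fun] at h1
    omega
  have hup : Module.finrank ℝ (vectorSpan ℝ F) ≤ Module.finrank ℝ (LinearMap.ker fy) :=
    Submodule.finrank_mono hWle
  have hdim : faceDim F + 1 = n := by
    have : faceDim F = Module.finrank ℝ (vectorSpan ℝ F) := rfl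
    omega
  obtain ⟨l, hl⟩ := hfacet F hFface hdim
  have htot : ∀ x : Fin n → ℝ, dotp x (y - fun i => (l i : ℝ)) = 0 := by
    intro x
    have hker : Submodule.span ℝ Vm ≤ LinearMap.ker (dotpL (y - fun i => (l i : ℝ))) := by
      rw [Submodule.span_le]
      intro v hv
      have ha : dotp v (fun i => (l i : ℝ)) = -1 := hl (hVmF hv)
      have hb : dotp v (y - fun i => (l i : ℝ)) = 0 := by
        rw [dotp_sub_right, hv.2, ha]
        ring
      exact hb
    have hx : x ∈ Submodule.span ℝ Vm := by rw [hspan]; exact Submodule.mem_top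
    exact hker hx
  intro i
  refine ⟨l i, ?_⟩
  have h1 := htot (Pi.single i 1)
  rw [dotp_single_left, one_mul] at h1
  have h2 : y i - (l i : ℝ) = 0 := by simpa using h1
  linarith

/-- The dual of an `n`-dimensional reflexive polytope (w.r.t. `ℤⁿ`)
is again an `n`-dimensional reflexive polytope (w.r.t. `ℤⁿ`): it is the convex hull of
finitely many lattice points, contains `0` in its interior, and each of its facets lies on a
hyperplane `{y | ⟨p, y⟩ = -1}` for some `p ∈ ℤⁿ`. -/

theorem dual_of_reflexive_isReflexive {n : ℕ} (Δ : Set (Fin n → ℝ))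
    (h : IsReflexive Δ) : IsReflexive (dualSet Δ) := by
  obtain ⟨⟨V, hVfin, hVlat, hΔ⟩, hint, hfacet⟩ := h
  rcases Nat.eq_zero_or_pos n with hn0 | hn
  · subst hn0
    have huniv : dualSet Δ = Set.univ :=
      Set.eq_univ_of_forall (fun y x hx => by norm_num [dotp])
    refine ⟨⟨{0}, Set.finite_singleton 0, ?_, ?_⟩, ?_, ?_⟩
    · intro v hv i
      exact i.elim0
    · rw [convexHull_singleton, huniv]
      exact (Set.eq_univ_of_forall fun x =>
        show x ∈ ({0} : Set (Fin 0 → ℝ)) from Subsingleton.elim x 0).symm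
    · rw [huniv, interior_univ]
      exact Set.mem_univ 0
    · intro F hF hdim
      exact absurd hdim (Nat.succ_ne_zero _)
  · have hDconv := convex_dualSet Δ
    have hDclosed := isClosed_dualSet Δ
    have hVΔ : V ⊆ Δ := by rw [hΔ]; exact subset_convexHull ℝ V
    obtain ⟨ε, hε0, hεb⟩ : ∃ ε > 0, Metric.ball (0 : Fin n → ℝ) ε ⊆ Δ := by
      have h1 := hint
      rw [mem_interior_iff_mem_nhds] at h1
      exact Metric.mem_nhds_iff.mp h1
    have hcomp : IsCompact Δ := by rw [hΔ]; exact hVfin.isCompact_convexHull (𝕜 := ℝ)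
    obtain ⟨R₀, hR₀⟩ := hcomp.isBounded.subset_closedBall 0
    set R : ℝ := max R₀ 1 with hR
    have hR1 : (0:ℝ) < R := lt_of_lt_of_le one_pos (le_max_right _ _)
    have hRx : ∀ x ∈ Δ, ‖x‖ ≤ R := by
      intro x hx
      have h2 := hR₀ hx
      rw [Metric.mem_closedBall, dist_zero_right] at h2
      exact le_trans h2 (le_max_left _ _)
    have hball := ball_subset_dualSet (Δ := Δ) hn hR1 hRx
    have hn' : (0:ℝ) < n := by exact_mod_cast hn
    have hδ0 : (0:ℝ) < 1 / (n * R) := by positivity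
    have hDsub : dualSet Δ ⊆ Metric.closedBall 0 (2/ε) := by
      intro y hy
      rw [Metric.mem_closedBall, dist_zero_right]
      exact norm_le_of_mem_dualSet hε0 hεb hy
    have hDcomp : IsCompact (dualSet Δ) :=
      (isCompact_closedBall (0 : Fin n → ℝ) (2/ε)).of_isClosed_subset hDclosed hDsub
    set W : Set (Fin n → ℝ) := dualSet Δ ∩ {y | IsLatticePoint y} with hW
    have hWfin : W.Finite := by
      apply (finite_lattice_of_norm_le (n := n) (2/ε)).subset
      rintro y ⟨hy1, hy2⟩
      exact ⟨hy2, norm_le_of_mem_dualSet hε0 hεb hy1⟩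
    have hEW : (dualSet Δ).extremePoints ℝ ⊆ W := by
      intro y hy
      exact ⟨hy.1, extreme_lattice hn hVfin hΔ hfacet hy⟩
    have hKM := closure_convexHull_extremePoints hDcomp hDconv
    have hWD : W ⊆ dualSet Δ := Set.inter_subset_left
    have hconvWclosed : IsClosed (convexHull ℝ W) := (hWfin.isCompact_convexHull (𝕜 := ℝ)).isClosed
    have h1 : dualSet Δ ⊆ convexHull ℝ W := by
      rw [← hKM]
      exact closure_minimal (convexHull_mono hEW) hconvWclosed
    have h2 : convexHull ℝ W ⊆ dualSet Δ := convexHull_min hWD hDconv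
    refine ⟨⟨W, hWfin, fun v hv => hv.2, Set.Subset.antisymm h1 h2⟩, ?_, ?_⟩
    · exact mem_interior.mpr ⟨Metric.ball 0 (1/(n*R)), hball, Metric.isOpen_ball,
        Metric.mem_ball_self hδ0⟩
    · intro G hG hdim
      obtain ⟨hGne, u, c, hub, hGeq⟩ := hG
      have hGsub : G ⊆ dualSet Δ := by rw [hGeq]; exact Set.sep_subset _ _
      have huz : u ≠ 0 := by
        rintro rfl
        obtain ⟨y₀, hy₀⟩ := hGne
        have hcc : c = 0 := by
          have h3 : dotp y₀ (0 : Fin n → ℝ) = c := (hGeq ▸ hy₀).2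
          rw [dotp_zero_right] at h3
          exact h3.symm
        have hGall : G = dualSet Δ := by
          rw [hGeq, hcc]
          ext z
          simp [dotp_zero_right]
        have hvs : vectorSpan ℝ G = ⊤ := by
          rw [hGall]
          exact vectorSpan_eq_top_of_ball hδ0 hball
        have h4 : faceDim G = n := by
          rw [show faceDim G = Module.finrank ℝ ↥(vectorSpan ℝ G) from rfl, hvs, finrank_top,
            Module.finrank_fin_fun]
        omega
      have hVne : V.Nonempty := by
        rcases Set.eq_empty_or_nonempty V with he | hne
        · exfalso
          rw [he, convexHull_empty] at hΔ
          rw [hΔ] at hint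
          simp at hint
        · exact hne
      have hGconv : Convex ℝ G := by
        rw [hGeq]
        have h3 : {y ∈ dualSet Δ | dotp y u = c} = dualSet Δ ∩ {y | dotp y u = c} := rfl
        rw [h3]
        exact hDconv.inter (convex_dotp_eq u c)
      by_cases hex : ∃ v ∈ V, ∀ z ∈ G, dotp v z = -1
      · obtain ⟨v, hvV, hvG⟩ := hex
        have hvl := hVlat v hvV
        refine ⟨fun i => (hvl i).choose, ?_⟩
        intro z hz
        have hveq : (fun i => ((hvl i).choose : ℝ)) = v := by
          funext i
          exact ((hvl i).choose_spec).symm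
        show dotp z _ = -1
        rw [hveq, dotp_comm]
        exact hvG z hz
      · exfalso
        push_neg at hex
        choose! Y hYG hYne using hex
        set V' := hVfin.toFinset with hV'
        have hV'ne : V'.Nonempty := by rwa [hV', Set.Finite.toFinset_nonempty]
        set k : ℝ := (V'.card : ℝ) with hk
        have hk0 : (0:ℝ) < k := by
          rw [hk]
          exact_mod_cast Finset.card_pos.mpr hV'ne
        set ys : Fin n → ℝ := ∑ v ∈ V', k⁻¹ • Y v with hys
        have hysG : ys ∈ G := by
          rw [hys]
          apply hGconv.sum_mem (fun v _ => (inv_pos.mpr hk0).le)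
          · rw [Finset.sum_const, nsmul_eq_mul, ← hk]
            exact mul_inv_cancel₀ (ne_of_gt hk0)
          · intro v hv
            exact hYG v (hVfin.mem_toFinset.mp hv)
        have hgt : ∀ v ∈ V, -1 < dotp v ys := by
          intro v hv
          rw [hys, dotp_sum_right]
          have hterm : ∀ v' ∈ V', -k⁻¹ ≤ dotp v (k⁻¹ • Y v') := by
            intro v' hv'
            rw [dotp_smul_right]
            have h5 : -1 ≤ dotp v (Y v') :=
              (hGsub (hYG v' (hVfin.mem_toFinset.mp hv'))) v (hVΔ hv)
            nlinarith [inv_pos.mpr hk0]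
          have hstrict : -k⁻¹ < dotp v (k⁻¹ • Y v) := by
            rw [dotp_smul_right]
            have h5 : -1 ≤ dotp v (Y v) := (hGsub (hYG v hv)) v (hVΔ hv)
            have h7 : -1 < dotp v (Y v) := lt_of_le_of_ne h5 (Ne.symm (hYne v hv))
            nlinarith [inv_pos.mpr hk0]
          have hsum := Finset.sum_lt_sum hterm ⟨v, hVfin.mem_toFinset.mpr hv, hstrict⟩
          have hconst : ∑ _v' ∈ V', (-k⁻¹) = -1 := by
            rw [Finset.sum_const, nsmul_eq_mul, ← hk]
            field_simp
          linarith [hconst ▸ hsum]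
        set m : ℝ := V'.inf' hV'ne (fun v => dotp v ys) with hm
        have hm1 : -1 < m := by
          rw [hm, Finset.lt_inf'_iff]
          intro v hv
          exact hgt v (hVfin.mem_toFinset.mp hv)
        have hmΔ : ∀ x ∈ Δ, m ≤ dotp x ys := by
          intro x hx
          have hsub : Δ ⊆ {x | m ≤ dotp x ys} := by
            rw [hΔ]
            apply convexHull_min _ (convex_dotp_ge m ys)
            intro v hv
            show m ≤ dotp v ys
            rw [hm]
            exact Finset.inf'_le (fun v => dotp v ys) (hVfin.mem_toFinset.mpr hv)
          exact hsub hx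
        set δ : ℝ := (m + 1) / (n * R) with hδ
        have hδpos : 0 < δ := by
          rw [hδ]
          apply div_pos (by linarith) (by positivity)
        have hballm : ∀ z : Fin n → ℝ, ‖z - ys‖ ≤ δ → z ∈ dualSet Δ := by
          intro z hz x hx
          have hb1 : |dotp x (z - ys)| ≤ n * (‖x‖ * ‖z - ys‖) := abs_dotp_le _ _
          have hb2 : (n:ℝ) * (‖x‖ * ‖z - ys‖) ≤ n * (R * δ) :=
            mul_le_mul_of_nonneg_left
              (mul_le_mul (hRx x hx) hz (norm_nonneg _) hR1.le) hn'.le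
          have hb3 : (n:ℝ) * (R * δ) = m + 1 := by
            rw [hδ]
            field_simp
          have hb4 : dotp x z = dotp x ys + dotp x (z - ys) := by
            rw [← dotp_add_right]
            congr 1
            abel
          have hb5 := hmΔ x hx
          have hb6 := neg_abs_le (dotp x (z - ys))
          show (-1:ℝ) ≤ dotp x z
          rw [hb4]
          linarith
        have hu2 : 0 < dotp u u := dotp_self_pos huz
        have hun : (0:ℝ) < ‖u‖ := norm_pos_iff.mpr huz
        set z : Fin n → ℝ := ys + (δ / ‖u‖) • u with hz
        have hz1 : ‖z - ys‖ ≤ δ := by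
          rw [hz]
          have h3 : ys + (δ / ‖u‖) • u - ys = (δ / ‖u‖) • u := by abel
          rw [h3, norm_smul, Real.norm_eq_abs, abs_of_pos (div_pos hδpos hun),
            div_mul_cancel₀ _ (ne_of_gt hun)]
        have hzD := hballm z hz1
        have hzc := hub z hzD
        have hysu : dotp ys u = c := (hGeq ▸ hysG).2
        have hzc2 : dotp z u = c + (δ / ‖u‖) * dotp u u := by
          rw [hz, dotp_add_left, dotp_smul_left, hysu]
        nlinarith [div_pos hδpos hun]
end

section
/- Let Δ ⊂ ℝⁿ be a reflexive simplex with vertices p₀, …, pₙ and dual vertices l₀, …, lₙ satisfying ⟨p_i, l_j⟩ = −1 for i ≠ j, and set b_{ii} = ⟨p_i, l_i⟩ and d = lcm(b₀₀+1, …, bₙₙ+1). Then there is a unique tuple w = (w₀, …, wₙ) of positive integers with gcd(w₀, …, wₙ) = 1 such that ∑ w_i p_i = 0 (the weights of Δ); this w satisfies B(Δ)·w = 0 for the matrix B(Δ) = (⟨p_i, l_j⟩), and w_i = d/(b_{ii}+1) for every i. -/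
/-!
Since `⟨pᵢ, lⱼ⟩ = -1` for `i ≠ j`, pairing a linear relation `∑ cᵢ pᵢ = 0` with `lⱼ` gives
`cⱼ (bⱼⱼ + 1) = ∑ cᵢ`. Applied to the barycentric coordinates of the interior point `0`, this
shows `bⱼⱼ + 1 > 0` and that the real relations among the vertices are exactly the multiples of
`(1 / (bⱼⱼ + 1))ⱼ`. Its primitive positive integer multiple is `(d / (bⱼⱼ + 1))ⱼ` with
`d = lcm (bⱼⱼ + 1)`, and `B(Δ) w = 0` is the same computation read along the rows of `B(Δ)`.
-/

open Finset

theorem exists_nonneg_sum_eq_one_of_mem_convexHull_range {ι R E : Type*} [Fintype ι]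
    [Field R] [LinearOrder R] [IsStrictOrderedRing R] [AddCommGroup E] [Module R E]
    {v : ι → E} {x : E} (hx : x ∈ convexHull R (Set.range v)) :
    ∃ t : ι → R, (∀ i, 0 ≤ t i) ∧ ∑ i, t i = 1 ∧ ∑ i, t i • v i = x := by
  classical
  rw [convexHull_range_eq_exists_affineCombination] at hx
  obtain ⟨s, w, hw₀, hw₁, rfl⟩ := hx
  refine ⟨fun i => if i ∈ s then w i else 0, fun i => ?_, ?_, ?_⟩
  · dsimp only
    split_ifs with hi
    exacts [hw₀ i hi, le_rfl]
  · rw [← hw₁, sum_ite_mem, univ_inter]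
  · simp [s.affineCombination_eq_linear_combination v w hw₁, ite_smul, sum_ite_mem]

theorem sum_mul_eq_of_offDiag_eq_neg_one {ι R : Type*} [Fintype ι] [DecidableEq ι] [CommRing R]
    {M : ι → ι → R} (hM : ∀ i j, i ≠ j → M i j = -1) (c : ι → R) (i : ι) :
    ∑ j, M i j * c j = c i * (M i i + 1) - ∑ j, c j := by
  have hoff : ∑ j ∈ univ.erase i, M i j * c j = ∑ j ∈ univ.erase i, -c j :=
    sum_congr rfl fun j hj => by rw [hM i j (ne_of_mem_erase hj).symm]; ring
  rw [← add_sum_erase _ _ (mem_univ i), hoff, sum_neg_distrib, sum_erase_eq_sub (mem_univ i)]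
  ring

theorem dotp_sum_smul {ι : Type*} [Fintype ι] {n : ℕ} (c : ι → ℝ) (p : ι → Fin n → ℝ)
    (y : Fin n → ℝ) : dotp (∑ i, c i • p i) y = ∑ i, c i * dotp (p i) y := by
  simp only [dotp, Finset.sum_apply, Pi.smul_apply, smul_eq_mul, sum_mul, mul_sum, mul_assoc]
  exact sum_comm

section PairedFamilies

variable {ι : Type*} [Fintype ι] [DecidableEq ι] {n : ℕ} {p l : ι → Fin n → ℝ}

theorem mul_dotp_add_one_eq_sum_of_sum_smul_eq_zero
    (hpair : ∀ i j, i ≠ j → dotp (p i) (l j) = -1) {c : ι → ℝ} (hc : ∑ i, c i • p i = 0)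
    (j : ι) : c j * (dotp (p j) (l j) + 1) = ∑ i, c i := by
  have hrow := sum_mul_eq_of_offDiag_eq_neg_one (M := fun j i => dotp (p i) (l j))
    (fun j i h => hpair i j h.symm) c j
  have hzero : ∑ i, dotp (p i) (l j) * c i = 0 := by
    calc ∑ i, dotp (p i) (l j) * c i = dotp (∑ i, c i • p i) (l j) := by
          simp only [dotp_sum_smul, mul_comm]
      _ = 0 := by rw [hc]; simp [dotp]
  linarith

theorem sum_dotp_mul_eq_zero_of_sum_smul_eq_zero
    (hpair : ∀ i j, i ≠ j → dotp (p i) (l j) = -1) {c : ι → ℝ} (hc : ∑ i, c i • p i = 0)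
    (i : ι) : ∑ j, dotp (p i) (l j) * c j = 0 := by
  rw [sum_mul_eq_of_offDiag_eq_neg_one (M := fun i j => dotp (p i) (l j)) hpair,
    mul_dotp_add_one_eq_sum_of_sum_smul_eq_zero hpair hc, sub_self]

theorem exists_barycentric_zero_mul_dotp_add_one_eq_one
    (hpair : ∀ i j, i ≠ j → dotp (p i) (l j) = -1) (h0 : 0 ∈ convexHull ℝ (Set.range p)) :
    ∃ t : ι → ℝ, (∀ i, 0 ≤ t i) ∧ (∀ j, t j * (dotp (p j) (l j) + 1) = 1) ∧
      ∑ i, t i • p i = 0 := by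
  obtain ⟨t, ht₀, ht₁, ht⟩ := exists_nonneg_sum_eq_one_of_mem_convexHull_range h0
  exact ⟨t, ht₀, fun j => by rw [mul_dotp_add_one_eq_sum_of_sum_smul_eq_zero hpair ht, ht₁], ht⟩

theorem dotp_add_one_pos (hpair : ∀ i j, i ≠ j → dotp (p i) (l j) = -1)
    (h0 : 0 ∈ convexHull ℝ (Set.range p)) (j : ι) : 0 < dotp (p j) (l j) + 1 := by
  obtain ⟨t, ht₀, ht, -⟩ := exists_barycentric_zero_mul_dotp_add_one_eq_one hpair h0
  exact pos_of_mul_pos_right (by rw [ht j]; exact one_pos) (ht₀ j)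

theorem sum_smul_eq_zero_of_mul_dotp_add_one_eq
    (hpair : ∀ i j, i ≠ j → dotp (p i) (l j) = -1) (h0 : 0 ∈ convexHull ℝ (Set.range p))
    {c : ι → ℝ} {s : ℝ} (hc : ∀ j, c j * (dotp (p j) (l j) + 1) = s) : ∑ i, c i • p i = 0 := by
  obtain ⟨t, -, ht, htp⟩ := exists_barycentric_zero_mul_dotp_add_one_eq_one hpair h0
  have hct : c = s • t := funext fun j => by
    rw [Pi.smul_apply, smul_eq_mul, ← hc j, mul_assoc, mul_comm _ (t j), ht j, mul_one]
  simp [hct, mul_smul, ← smul_sum, htp]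

end PairedFamilies

section LcmWeights

variable {ι : Type*} [Fintype ι] {a : ι → ℤ}

theorem lcm_pos_of_pos (ha : ∀ i, 0 < a i) : 0 < univ.lcm a := by
  refine lt_of_le_of_ne (Int.nonneg_of_normalize_eq_self normalize_lcm) fun h => ?_
  obtain ⟨i, -, hi⟩ := lcm_eq_zero_iff.mp h.symm
  exact (ha i).ne' hi

theorem mul_eq_lcm_of_gcd_eq_one (ha : ∀ i, 0 < a i) {w : ι → ℤ} (hw : ∀ i, 0 < w i)
    (hgcd : univ.gcd w = 1) {S : ℤ} (hS : ∀ i, w i * a i = S) (i : ι) :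
    w i * a i = univ.lcm a := by
  obtain ⟨m, hm⟩ : univ.lcm a ∣ S := lcm_dvd fun j _ => Dvd.intro_left _ (hS j)
  have hm_dvd : ∀ j, m ∣ w j := fun j => by
    have hj : w j * a j = (univ.lcm a / a j * m) * a j := by
      rw [hS j, hm, mul_right_comm, Int.ediv_mul_cancel (dvd_lcm (mem_univ j))]
    exact Dvd.intro_left _ (mul_right_cancel₀ (ha j).ne' hj).symm
  have hm_pos : 0 < m :=
    pos_of_mul_pos_right (hm ▸ hS i ▸ mul_pos (hw i) (ha i)) (lcm_pos_of_pos ha).le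
  have hm_one : m = 1 := Int.eq_one_of_dvd_one hm_pos.le (hgcd ▸ Finset.dvd_gcd fun j _ => hm_dvd j)
  rw [hS i, hm, hm_one, mul_one]

theorem exists_pos_gcd_eq_one_mul_eq_lcm [Nonempty ι] (ha : ∀ i, 0 < a i) :
    ∃ w : ι → ℤ, (∀ i, 0 < w i) ∧ univ.gcd w = 1 ∧ ∀ i, w i * a i = univ.lcm a := by
  set W : ι → ℤ := fun i => univ.lcm a / a i
  have hW : ∀ i, W i * a i = univ.lcm a := fun i => Int.ediv_mul_cancel (dvd_lcm (mem_univ i))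
  have hW_pos : ∀ i, 0 < W i := fun i =>
    pos_of_mul_pos_left ((hW i).symm ▸ lcm_pos_of_pos ha) (ha i).le
  obtain ⟨w, hWw, hgcd⟩ := extract_gcd W univ_nonempty
  have hg_nonneg : 0 ≤ univ.gcd W := Int.nonneg_of_normalize_eq_self normalize_gcd
  have hw_pos : ∀ i, 0 < w i := fun i =>
    pos_of_mul_pos_right (hWw i (mem_univ i) ▸ hW_pos i) hg_nonneg
  obtain ⟨i₀⟩ := ‹Nonempty ι›
  have hg_ne : univ.gcd W ≠ 0 := fun h => (hW_pos i₀).ne' <| by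
    rw [hWw i₀ (mem_univ i₀), h, zero_mul]
  refine ⟨w, hw_pos, hgcd, mul_eq_lcm_of_gcd_eq_one ha hw_pos hgcd (S := w i₀ * a i₀)
    fun i => mul_left_cancel₀ hg_ne ?_⟩
  rw [← mul_assoc, ← mul_assoc, ← hWw i (mem_univ i), ← hWw i₀ (mem_univ i₀), hW, hW]

end LcmWeights

theorem reflexive_simplex_weights_general (n : ℕ) (Δ : Set (Fin n → ℝ))
    (p l : Fin (n + 1) → (Fin n → ℝ))
    (hΔ : Δ = convexHull ℝ (Set.range p))
    (href : IsReflexive Δ)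
    (hpair : ∀ i j, i ≠ j → dotp (p i) (l j) = -1)
    (b : Fin (n + 1) → ℤ) (hb : ∀ i, (b i : ℝ) = dotp (p i) (l i)) :
    (∃! w : Fin (n + 1) → ℤ,
      (∀ i, 0 < w i) ∧ Finset.univ.gcd w = 1 ∧
        ∑ i, (w i : ℝ) • p i = (0 : Fin n → ℝ)) ∧
    (∀ w : Fin (n + 1) → ℤ,
      ((∀ i, 0 < w i) ∧ Finset.univ.gcd w = 1 ∧
        ∑ i, (w i : ℝ) • p i = (0 : Fin n → ℝ)) →
      (∀ i, ∑ j, dotp (p i) (l j) * (w j : ℝ) = 0) ∧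
      (∀ i, w i * (b i + 1) = Finset.univ.lcm fun k => b k + 1)) := by
  have h0 : (0 : Fin n → ℝ) ∈ convexHull ℝ (Set.range p) := hΔ ▸ interior_subset href.2.1
  have hb₁ : ∀ i, ((b i + 1 : ℤ) : ℝ) = dotp (p i) (l i) + 1 := fun i => by push_cast [hb]; rfl
  have hb₁_pos : ∀ i, 0 < b i + 1 := fun i => by
    exact_mod_cast (hb₁ i).symm ▸ dotp_add_one_pos hpair h0 i
  have hmul_lcm : ∀ w : Fin (n + 1) → ℤ, ((∀ i, 0 < w i) ∧ Finset.univ.gcd w = 1 ∧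
      ∑ i, (w i : ℝ) • p i = (0 : Fin n → ℝ)) →
      ∀ i, w i * (b i + 1) = Finset.univ.lcm fun k => b k + 1 := by
    rintro w ⟨hw_pos, hw_gcd, hw⟩
    refine mul_eq_lcm_of_gcd_eq_one hb₁_pos hw_pos hw_gcd (S := ∑ i, w i) fun j => ?_
    have hrel := mul_dotp_add_one_eq_sum_of_sum_smul_eq_zero hpair hw j
    rw [← hb₁] at hrel
    exact_mod_cast hrel
  obtain ⟨W, hW_pos, hW_gcd, hW⟩ := exists_pos_gcd_eq_one_mul_eq_lcm hb₁_pos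
  have hW_rel : ∑ i, (W i : ℝ) • p i = 0 :=
    sum_smul_eq_zero_of_mul_dotp_add_one_eq hpair h0 fun j => by
      rw [← hb₁, ← Int.cast_mul, hW j]
  refine ⟨⟨W, ⟨hW_pos, hW_gcd, hW_rel⟩, fun w hw => funext fun i =>
    mul_right_cancel₀ (hb₁_pos i).ne' ((hmul_lcm w hw i).trans (hW i).symm)⟩,
    fun w hw => ⟨sum_dotp_mul_eq_zero_of_sum_smul_eq_zero hpair hw.2.2, hmul_lcm w hw⟩⟩

/-- Let `Δ ⊂ ℝⁿ` be a reflexive simplex with vertices `p₀, …, pₙ`, dual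
vertices `l₀, …, lₙ` (so `⟨pᵢ, lⱼ⟩ = -1` for `i ≠ j`), diagonal entries `bᵢ = ⟨pᵢ, lᵢ⟩ ∈ ℤ`
and `d = lcm(b₀ + 1, …, bₙ + 1)`. Then there is a unique tuple `w` of positive integers
with `gcd w = 1` and `∑ wᵢ pᵢ = 0` (the weights of `Δ`); it satisfies `B(Δ)·w = 0` and
`wᵢ·(bᵢ + 1) = d` (i.e. `wᵢ = d/(bᵢᵢ + 1)`) for every `i`. -/
theorem reflexive_simplex_weights (n : ℕ) (Δ : Set (Fin n → ℝ))
    (p l : Fin (n + 1) → (Fin n → ℝ))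
    (hp : ∀ i, IsLatticePoint (p i)) (hl : ∀ j, IsLatticePoint (l j))
    (haff : AffineIndependent ℝ p)
    (hΔ : Δ = convexHull ℝ (Set.range p))
    (href : IsReflexive Δ)
    (hdual : dualSet Δ = convexHull ℝ (Set.range l))
    (hpair : ∀ i j, i ≠ j → dotp (p i) (l j) = -1)
    (b : Fin (n + 1) → ℤ) (hb : ∀ i, (b i : ℝ) = dotp (p i) (l i)) :
    (∃! w : Fin (n + 1) → ℤ,
      (∀ i, 0 < w i) ∧ Finset.univ.gcd w = 1 ∧
        ∑ i, (w i : ℝ) • p i = (0 : Fin n → ℝ)) ∧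
    (∀ w : Fin (n + 1) → ℤ,
      ((∀ i, 0 < w i) ∧ Finset.univ.gcd w = 1 ∧
        ∑ i, (w i : ℝ) • p i = (0 : Fin n → ℝ)) →
      (∀ i, ∑ j, dotp (p i) (l j) * (w j : ℝ) = 0) ∧
      (∀ i, w i * (b i + 1) = Finset.univ.lcm fun k => b k + 1)) :=
  reflexive_simplex_weights_general n Δ p l hΔ href hpair b hb
end

section
/- Every reflexive simplex is selfdual: if Δ ⊂ ℝⁿ is a reflexive simplex with vertices p₀, …, pₙ and weights w = (w₀, …, wₙ), and l₀, …, lₙ are the vertices of the dual reflexive simplex Δ* indexed so that ⟨p_i, l_j⟩ = −1 for i ≠ j, then ∑_{j=0}^{n} w_j l_j = 0; that is, the dual reflexive simplex Δ* has exactly the same weights w as Δ. -/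
open Finset

/-!
The pairing matrix `(⟨pᵢ, lⱼ⟩)ᵢⱼ` has all its off-diagonal entries equal to `-1`, so it
is symmetric. The relation `∑ wᵢ pᵢ = 0` says that `w` lies in its left kernel; by
symmetry `w` also lies in its right kernel, i.e. `⟨pᵢ, ∑ wⱼ lⱼ⟩ = 0` for every `i`.
As the vertices `pᵢ` of a simplex span `ℝⁿ`, this forces `∑ wⱼ lⱼ = 0`.
-/

open Matrix

theorem Matrix.isSymm_of_offDiag_eq {ι R : Type*} {M : Matrix ι ι R} {c : R}
    (hM : ∀ i j, i ≠ j → M i j = c) : M.IsSymm := by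
  refine IsSymm.ext fun i j => ?_
  rcases eq_or_ne i j with rfl | hij
  · rfl
  · rw [hM i j hij, hM j i hij.symm]

theorem Matrix.mulVec_vecMul_eq_zero_of_isSymm {ι m R : Type*} [Fintype ι] [Fintype m]
    [CommSemiring R] {P L : Matrix ι m R} (hPL : (P * Lᵀ).IsSymm) {w : ι → R}
    (hw : w ᵥ* P = 0) : P *ᵥ (w ᵥ* L) = 0 :=
  calc P *ᵥ (w ᵥ* L) = w ᵥ* (P * Lᵀ)ᵀ := by
        rw [vecMul_transpose, ← mulVec_mulVec, mulVec_transpose]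
    _ = (w ᵥ* P) ᵥ* Lᵀ := by rw [hPL.eq, vecMul_vecMul]
    _ = 0 := by rw [hw, zero_vecMul]

theorem Matrix.eq_zero_of_forall_dotProduct_eq_zero {ι n R : Type*} [Fintype n]
    [DecidableEq n] [CommSemiring R] {v : ι → n → R}
    (hv : Submodule.span R (Set.range v) = ⊤) {y : n → R} (h : ∀ i, v i ⬝ᵥ y = 0) :
    y = 0 := by
  refine (dotProductEquiv R n).injective ?_
  rw [map_zero]
  refine LinearMap.ext_on_range hv fun i => ?_
  simp [dotProduct_comm y, h]

theorem AffineIndependent.span_eq_top {ι k V : Type*} [Fintype ι] [DivisionRing k]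
    [AddCommGroup V] [Module k V] [FiniteDimensional k V] {p : ι → V}
    (hp : AffineIndependent k p)
    (hcard : Fintype.card ι = Module.finrank k V + 1) : Submodule.span k (Set.range p) = ⊤ := by
  have htop : affineSpan k (Set.range p) = ⊤ :=
    hp.affineSpan_eq_top_iff_card_eq_finrank_add_one.2 hcard
  exact Submodule.eq_top_iff'.2 fun x =>
    affineSpan_subset_span (htop ▸ AffineSubspace.mem_top k _ x)

theorem reflexive_simplex_selfdual_general (n : ℕ)
    (p l : Fin (n + 1) → (Fin n → ℝ))
    (haff : AffineIndependent ℝ p)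
    (hpair : ∀ i j, i ≠ j → dotp (p i) (l j) = -1)
    (w : Fin (n + 1) → ℤ)
    (hwsum : ∑ i, (w i : ℝ) • p i = (0 : Fin n → ℝ)) :
    ∑ j, (w j : ℝ) • l j = (0 : Fin n → ℝ) := by
  have hsymm : (Matrix.of p * (Matrix.of l)ᵀ).IsSymm := isSymm_of_offDiag_eq hpair
  have hw : (fun i => (w i : ℝ)) ᵥ* Matrix.of p = 0 := (vecMul_eq_sum _ _).trans hwsum
  have hspan : Submodule.span ℝ (Set.range p) = ⊤ := haff.span_eq_top (by simp)
  have h := mulVec_vecMul_eq_zero_of_isSymm hsymm hw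
  rw [vecMul_eq_sum] at h
  exact eq_zero_of_forall_dotProduct_eq_zero hspan (congrFun h)

/-- Every reflexive simplex is selfdual: if `Δ ⊂ ℝⁿ` is a reflexive
simplex with vertices `p₀, …, pₙ` and weights `w`, and `l₀, …, lₙ` are the vertices of the
dual reflexive simplex `Δ*` indexed so that `⟨pᵢ, lⱼ⟩ = -1` for `i ≠ j`, then
`∑ⱼ wⱼ lⱼ = 0`, i.e. `Δ*` has exactly the same weights `w` as `Δ`. -/
theorem reflexive_simplex_selfdual (n : ℕ) (Δ : Set (Fin n → ℝ))
    (p l : Fin (n + 1) → (Fin n → ℝ))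
    (hp : ∀ i, IsLatticePoint (p i)) (hl : ∀ j, IsLatticePoint (l j))
    (haff : AffineIndependent ℝ p)
    (hΔ : Δ = convexHull ℝ (Set.range p))
    (href : IsReflexive Δ)
    (hdual : dualSet Δ = convexHull ℝ (Set.range l))
    (hpair : ∀ i j, i ≠ j → dotp (p i) (l j) = -1)
    (w : Fin (n + 1) → ℤ) (hwpos : ∀ i, 0 < w i)
    (hwgcd : Finset.univ.gcd w = 1)
    (hwsum : ∑ i, (w i : ℝ) • p i = (0 : Fin n → ℝ)) :
    ∑ j, (w j : ℝ) • l j = (0 : Fin n → ℝ) :=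
  reflexive_simplex_selfdual_general n p l haff hpair w hwsum
end

section
/- Let d₀, …, dₙ be positive integers with ∑_{i=0}^{n} 1/d_i = 1, let d = lcm(d₀, …, dₙ) and w_i = d/d_i. Let M(w) = {a ∈ ℤ^{n+1} : ∑ w_i a_i = 0} and let M_B(w) ⊆ M(w) be the subgroup generated by the n+1 vectors d_i·e_i − (1, 1, …, 1), i = 0, …, n (where e_i is the i-th standard basis vector). Then the quotient group M(w)/M_B(w) is isomorphic to the kernel of the group homomorphism γ̄ : (ZMod d₀ × ⋯ × ZMod dₙ)/⟨(1, …, 1)⟩ → ZMod d that sends the class of (a₀, …, aₙ) to ∑ w_i a_i modulo d (this map is well defined since w_i·d_i = d for each i and ∑ w_i = d ≡ 0 mod d). -/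
/-!
Reduction modulo `(d₀, …, dₙ)` maps `M(w)` into `(∏ ZMod dᵢ)/⟨(1, …, 1)⟩`. Since `wᵢ dᵢ = d`,
the weight `∑ wᵢ aᵢ` taken mod `d` only depends on the residues, so the image lies in `ker γ̄`;
conversely a lift with weight `k d` is moved into `M(w)` by subtracting `k (1, …, 1)`, which has
weight `k ∑ wᵢ = k d` and trivial class. A vector reducing into the diagonal is `m (1, …, 1)` plus
a combination of the `dᵢ eᵢ = (dᵢ eᵢ - (1, …, 1)) + (1, …, 1)`, so it lies in `M_B(w)` up to a
multiple of `(1, …, 1)`, which must vanish when the weight is zero because `d ≠ 0`.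
-/

open QuotientAddGroup AddSubgroup

variable {ι : Type*}

theorem nonempty_quotient_addEquiv_ker {G Q R : Type*} [AddCommGroup G] [AddGroup Q] [AddGroup R]
    (ψ : G →+ Q) (γ : Q →+ R) {N : AddSubgroup G} (hN : ψ.ker = N) (hψ : ψ.range = γ.ker) :
    Nonempty (G ⧸ N ≃+ γ.ker) :=
  ⟨(quotientAddEquivOfEq hN.symm).trans
    ((quotientKerEquivRange ψ).trans (AddEquiv.addSubgroupCongr hψ))⟩

theorem Finset.sum_div_eq_of_sum_one_div_eq_one {s : Finset ι} {d : ι → ℕ} {D : ℕ}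
    (hdvd : ∀ i ∈ s, d i ∣ D) (hsum : ∑ i ∈ s, (1 : ℚ) / d i = 1) :
    ∑ i ∈ s, D / d i = D := by
  have : ((∑ i ∈ s, D / d i : ℕ) : ℚ) = D := by
    rw [Nat.cast_sum, ← mul_one (D : ℚ), ← hsum, Finset.mul_sum]
    refine Finset.sum_congr rfl fun i hi => ?_
    rw [Nat.cast_div_charZero (hdvd i hi), mul_one_div]
  exact_mod_cast this

theorem natCast_mul_val_intCast {w d D : ℕ} [NeZero d] (hwd : w * d = D) (x : ℤ) :
    (w : ZMod D) * ((x : ZMod d).val : ZMod D) = w * x := by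
  have : (w : ℤ) * ((x : ZMod d).val : ℤ) = w * x - D * (x / d) := by
    rw [ZMod.val_intCast, Int.emod_def, ← hwd]
    push_cast
    ring
  have := congrArg (Int.cast : ℤ → ZMod D) this
  push_cast at this
  simpa using this

/-- `M(w)` is the kernel of this form. -/
def weightForm [Fintype ι] (w : ι → ℕ) : (ι → ℤ) →+ ℤ where
  toFun a := ∑ i, (w i : ℤ) * a i
  map_zero' := by simp
  map_add' a b := by simp [mul_add, Finset.sum_add_distrib]

theorem weightForm_apply [Fintype ι] (w : ι → ℕ) (a : ι → ℤ) :
    weightForm w a = ∑ i, (w i : ℤ) * a i :=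
  rfl

theorem weightForm_one [Fintype ι] (w : ι → ℕ) : weightForm w 1 = ∑ i, (w i : ℤ) := by
  simp [weightForm_apply]

def reduceMod (d : ι → ℕ) : (ι → ℤ) →+ ∀ i, ZMod (d i) :=
  AddMonoidHom.pi fun i => (Int.castAddHom (ZMod (d i))).comp (Pi.evalAddMonoidHom _ i)

theorem reduceMod_apply (d : ι → ℕ) (a : ι → ℤ) (i : ι) : reduceMod d a i = a i := rfl

theorem reduceMod_one (d : ι → ℕ) : reduceMod d 1 = 1 := by
  ext
  simp [reduceMod_apply]

theorem reduceMod_surjective (d : ι → ℕ) [∀ i, NeZero (d i)] : Function.Surjective (reduceMod d) :=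
  fun b => ⟨fun i => (b i).val, funext fun i => by simp [reduceMod_apply]⟩

theorem reduceMod_mem_zmultiples_one_iff (d : ι → ℕ) (a : ι → ℤ) :
    reduceMod d a ∈ zmultiples 1 ↔ ∃ m : ℤ, ∀ i, (d i : ℤ) ∣ a i - m := by
  simp only [mem_zmultiples_iff, funext_iff, zsmul_one, Pi.intCast_apply, reduceMod_apply,
    ZMod.intCast_eq_intCast_iff_dvd_sub]

section Generators

variable [DecidableEq ι] (d : ι → ℕ)

def scaledBasisSubOne (i : ι) : ι → ℤ := Pi.single i (d i : ℤ) - 1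

theorem reduceMod_scaledBasisSubOne (i : ι) : reduceMod d (scaledBasisSubOne d i) = -1 := by
  ext j
  rcases eq_or_ne j i with rfl | hji <;> simp [reduceMod_apply, scaledBasisSubOne, *]

theorem single_mem_closure_scaledBasisSubOne_sup (i : ι) :
    Pi.single i (d i : ℤ) ∈ AddSubgroup.closure (Set.range (scaledBasisSubOne d)) ⊔ zmultiples 1 :=
  mem_sup.mpr ⟨_, subset_closure (Set.mem_range_self i), 1, mem_zmultiples 1,
    sub_add_cancel _ _⟩

variable [Fintype ι]

theorem weightForm_scaledBasisSubOne {w : ι → ℕ} {D : ℕ} (hwd : ∀ i, w i * d i = D)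
    (hwD : ∑ i, w i = D) (i : ι) : weightForm w (scaledBasisSubOne d i) = 0 := by
  rw [scaledBasisSubOne, map_sub, weightForm_one, sub_eq_zero, ← Nat.cast_sum, hwD, ← hwd i]
  simp [weightForm_apply, Pi.single_apply]

theorem comap_reduceMod_zmultiples_one_le :
    (zmultiples 1).comap (reduceMod d) ≤
      AddSubgroup.closure (Set.range (scaledBasisSubOne d)) ⊔ zmultiples 1 := by
  intro a ha
  obtain ⟨m, hm⟩ := (reduceMod_mem_zmultiples_one_iff d a).mp ha
  choose c hc using hm
  have hsplit : a = ∑ i, c i • Pi.single i (d i : ℤ) + m • 1 := by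
    refine eq_add_of_sub_eq ?_
    rw [← Finset.univ_sum_single (a - m • 1)]
    refine Finset.sum_congr rfl fun i _ => ?_
    rw [← Pi.single_smul, smul_eq_mul, mul_comm, ← hc i]
    simp
  rw [hsplit]
  refine add_mem (sum_mem fun i _ => zsmul_mem (single_mem_closure_scaledBasisSubOne_sup d i) _) ?_
  exact mem_sup_right (zsmul_mem (mem_zmultiples 1) m)

theorem closure_scaledBasisSubOne_eq {w : ι → ℕ} {D : ℕ} (hD : D ≠ 0) (hwd : ∀ i, w i * d i = D)
    (hwD : ∑ i, w i = D) :
    AddSubgroup.closure (Set.range (scaledBasisSubOne d)) =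
      (weightForm w).ker ⊓ (zmultiples 1).comap (reduceMod d) := by
  have hle : AddSubgroup.closure (Set.range (scaledBasisSubOne d)) ≤
      (weightForm w).ker ⊓ (zmultiples 1).comap (reduceMod d) := by
    rw [closure_le]
    rintro _ ⟨i, rfl⟩
    refine ⟨weightForm_scaledBasisSubOne d hwd hwD i, ?_⟩
    show reduceMod d _ ∈ zmultiples 1
    rw [reduceMod_scaledBasisSubOne]
    exact neg_mem (mem_zmultiples 1)
  refine le_antisymm hle fun a ⟨ha, hρa⟩ => ?_
  obtain ⟨b, hb, _, ⟨k, rfl⟩, rfl⟩ := mem_sup.mp (comap_reduceMod_zmultiples_one_le d hρa)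
  have hk : k = 0 := by
    have hwb : weightForm w b = 0 := (hle hb).1
    have : weightForm w (b + k • 1) = k * D := by
      rw [map_add, hwb, map_zsmul, weightForm_one, smul_eq_mul, zero_add, ← Nat.cast_sum, hwD]
    rw [(AddMonoidHom.mem_ker).mp ha] at this
    simpa [hD] using this.symm
  simpa [hk] using hb

end Generators

section Weights

variable [Fintype ι] {d w : ι → ℕ} {D : ℕ}

theorem map_mk_reduceMod [∀ i, NeZero (d i)] (hwd : ∀ i, w i * d i = D)
    (γ : (∀ i, ZMod (d i)) ⧸ zmultiples 1 →+ ZMod D)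
    (hγ : ∀ a, γ (mk a) = ∑ i, (w i : ZMod D) * ((a i).val : ZMod D)) (a : ι → ℤ) :
    γ (mk (reduceMod d a)) = (weightForm w a : ZMod D) := by
  rw [hγ, weightForm_apply, Int.cast_sum]
  refine Finset.sum_congr rfl fun i _ => ?_
  rw [reduceMod_apply, natCast_mul_val_intCast (hwd i), Int.cast_mul, Int.cast_natCast]

variable (d w) in
def weightLatticeReduction : (weightForm w).ker →+ (∀ i, ZMod (d i)) ⧸ zmultiples 1 :=
  (mk' _).comp ((reduceMod d).comp (weightForm w).ker.subtype)

theorem range_weightLatticeReduction [∀ i, NeZero (d i)] (hwd : ∀ i, w i * d i = D)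
    (hwD : ∑ i, w i = D) (γ : (∀ i, ZMod (d i)) ⧸ zmultiples 1 →+ ZMod D)
    (hγ : ∀ a, γ (mk a) = ∑ i, (w i : ZMod D) * ((a i).val : ZMod D)) :
    (weightLatticeReduction d w).range = γ.ker := by
  apply le_antisymm
  · rintro _ ⟨a, rfl⟩
    show γ (mk (reduceMod d a)) = 0
    rw [map_mk_reduceMod hwd γ hγ, (AddMonoidHom.mem_ker).mp a.2, Int.cast_zero]
  · intro y hy
    obtain ⟨b, rfl⟩ := mk_surjective y
    obtain ⟨a, rfl⟩ := reduceMod_surjective d b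
    rw [AddMonoidHom.mem_ker, map_mk_reduceMod hwd γ hγ, ZMod.intCast_zmod_eq_zero_iff_dvd] at hy
    obtain ⟨k, hk⟩ := hy
    refine ⟨⟨a - k • 1, ?_⟩, ?_⟩
    · rw [AddMonoidHom.mem_ker, map_sub, map_zsmul, weightForm_one, ← Nat.cast_sum, hwD, hk,
        smul_eq_mul, mul_comm, sub_self]
    · show mk (reduceMod d (a - k • 1)) = mk (reduceMod d a)
      rw [map_sub, map_zsmul, reduceMod_one, QuotientAddGroup.eq]
      simp

theorem ker_weightLatticeReduction [DecidableEq ι] (hD : D ≠ 0) (hwd : ∀ i, w i * d i = D)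
    (hwD : ∑ i, w i = D) :
    (weightLatticeReduction d w).ker =
      (AddSubgroup.closure (Set.range (scaledBasisSubOne d))).addSubgroupOf (weightForm w).ker := by
  rw [closure_scaledBasisSubOne_eq d hD hwd hwD, inf_addSubgroupOf_left, weightLatticeReduction,
    ← AddMonoidHom.comap_ker, ker_mk', ← comap_comap]
  rfl

end Weights

/-- Let `d₀, …, dₙ` be positive integers with `∑ 1/dᵢ = 1`,
`D = lcm(d₀, …, dₙ)` and `wᵢ = D/dᵢ`. Let `M(w) = {a ∈ ℤ^{n+1} | ∑ wᵢ aᵢ = 0}` and let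
`M_B(w)` be its subgroup generated by the vectors `dᵢ·eᵢ - (1, …, 1)`. Let `γ̄` be the
group homomorphism `(ZMod d₀ × ⋯ × ZMod dₙ)/⟨(1, …, 1)⟩ → ZMod D` sending the class of
`a` to `∑ wᵢ aᵢ (mod D)`. Then `M(w)/M_B(w)` is isomorphic to the kernel of `γ̄`. -/
theorem weight_quotient_iso_kernel
    (n : ℕ) (d : Fin (n + 1) → ℕ) (hd : ∀ i, 0 < d i)
    (hsum : ∑ i, (1 : ℚ) / (d i) = 1)
    (D : ℕ) (hD : D = Finset.univ.lcm d)
    (w : Fin (n + 1) → ℕ) (hw : ∀ i, w i = D / d i)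
    (Mw : AddSubgroup (Fin (n + 1) → ℤ))
    (hMw : (Mw : Set (Fin (n + 1) → ℤ)) = {a | ∑ i, (w i : ℤ) * a i = 0})
    (MB : AddSubgroup (Fin (n + 1) → ℤ))
    (hMB : MB = AddSubgroup.closure
      (Set.range fun i : Fin (n + 1) =>
        fun j : Fin (n + 1) => (if j = i then (d i : ℤ) else 0) - 1))
    (O : AddSubgroup (∀ i, ZMod (d i)))
    (hO : O = AddSubgroup.closure {fun i => (1 : ZMod (d i))})
    (γbar : ((∀ i, ZMod (d i)) ⧸ O) →+ ZMod D)
    (hγbar : ∀ a : ∀ i, ZMod (d i),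
      γbar (QuotientAddGroup.mk a) = ∑ i, (w i : ZMod D) * ((a i).val : ZMod D)) :
    Nonempty ((↥Mw ⧸ MB.addSubgroupOf Mw) ≃+ ↥γbar.ker) := by
  have : ∀ i, NeZero (d i) := fun i => ⟨(hd i).ne'⟩
  have hdvd : ∀ i, d i ∣ D := fun i => hD ▸ Finset.dvd_lcm (Finset.mem_univ i)
  have hD0 : D ≠ 0 := by
    rw [hD, Ne, Finset.lcm_eq_zero_iff]
    rintro ⟨i, -, hi⟩
    exact (hd i).ne' hi
  have hwd : ∀ i, w i * d i = D := fun i => by rw [hw, Nat.div_mul_cancel (hdvd i)]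
  have hwD : ∑ i, w i = D := by
    simpa only [hw] using Finset.sum_div_eq_of_sum_one_div_eq_one (fun i _ => hdvd i) hsum
  obtain rfl : Mw = (weightForm w).ker := SetLike.coe_injective hMw
  obtain rfl : MB = AddSubgroup.closure (Set.range (scaledBasisSubOne d)) := by
    rw [hMB]
    congr! with i j
    simp [scaledBasisSubOne, Pi.single_apply]
  obtain rfl : O = zmultiples 1 := hO.trans (zmultiples_eq_closure _).symm
  exact nonempty_quotient_addEquiv_ker _ γbar (ker_weightLatticeReduction hD0 hwd hwD)
    (range_weightLatticeReduction hwd hwD γbar hγbar)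
end

section
/- Let d₀, …, dₙ be positive integers with ∑_{i=0}^{n} 1/d_i = 1, let d = lcm(d₀, …, dₙ) and w_i = d/d_i. Let M(w) = {a ∈ ℤ^{n+1} : ∑ w_i a_i = 0} and let M_B(w) ⊆ M(w) be the subgroup generated by the vectors d_i·e_i − (1, 1, …, 1), i = 0, …, n. Then M_B(w) has finite index in M(w), and this index equals (d₀·d₁ ⋯ dₙ)/d². -/
open Finset

set_option maxHeartbeats 1000000

lemma bezout_finset {ι : Type*} [DecidableEq ι] (s : Finset ι) (f : ι → ℤ) :
    ∃ c : ι → ℤ, ∑ i ∈ s, c i * f i = s.gcd f := by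
  induction s using Finset.induction_on with
  | empty => exact ⟨0, by simp⟩
  | @insert a s ha ih =>
    obtain ⟨c, hc⟩ := ih
    refine ⟨fun i => if i = a then Int.gcdA (f a) (s.gcd f)
      else c i * Int.gcdB (f a) (s.gcd f), ?_⟩
    rw [Finset.sum_insert ha, Finset.gcd_insert]
    simp only [if_pos rfl]
    have h2 : ∑ i ∈ s, (if i = a then Int.gcdA (f a) (s.gcd f)
        else c i * Int.gcdB (f a) (s.gcd f)) * f i
        = (∑ i ∈ s, c i * f i) * Int.gcdB (f a) (s.gcd f) := by
      rw [Finset.sum_mul]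
      refine Finset.sum_congr rfl fun i hi => ?_
      rw [if_neg (by rintro rfl; exact ha hi)]
      ring
    rw [h2, hc]
    have h3 := Int.gcd_eq_gcd_ab (f a) (s.gcd f)
    rw [Int.coe_gcd] at h3
    rw [h3]
    simp only [if_true]
    ring

/-- Let `d₀, …, dₙ` be positive integers with `∑ 1/dᵢ = 1`,
`D = lcm(d₀, …, dₙ)` and `wᵢ = D/dᵢ`. Let `M(w) = {a ∈ ℤ^{n+1} | ∑ wᵢ aᵢ = 0}` and let
`M_B(w)` be its subgroup generated by the vectors `dᵢ·eᵢ - (1, …, 1)`. Then `M_B(w)` has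
finite index in `M(w)`, equal to `(d₀·d₁ ⋯ dₙ)/D²`. -/
theorem weight_sublattice_index
    (n : ℕ) (d : Fin (n + 1) → ℕ) (hd : ∀ i, 0 < d i)
    (hsum : ∑ i, (1 : ℚ) / (d i) = 1)
    (D : ℕ) (hD : D = Finset.univ.lcm d)
    (w : Fin (n + 1) → ℕ) (hw : ∀ i, w i = D / d i)
    (Mw : AddSubgroup (Fin (n + 1) → ℤ))
    (hMw : (Mw : Set (Fin (n + 1) → ℤ)) = {a | ∑ i, (w i : ℤ) * a i = 0})
    (MB : AddSubgroup (Fin (n + 1) → ℤ))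
    (hMB : MB = AddSubgroup.closure
      (Set.range fun i : Fin (n + 1) =>
        fun j : Fin (n + 1) => (if j = i then (d i : ℤ) else 0) - 1)) :
    (MB.addSubgroupOf Mw).index ≠ 0 ∧
      (MB.addSubgroupOf Mw).index * (D * D) = ∏ i, d i := by
  classical
  -- basic facts
  have hdD : ∀ i, d i ∣ D := fun i => hD ▸ Finset.dvd_lcm (Finset.mem_univ i)
  have hwd : ∀ i, w i * d i = D := fun i => by rw [hw i, Nat.div_mul_cancel (hdD i)]
  have hD0 : 0 < D := by
    rcases Nat.eq_zero_or_pos D with h | h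
    · rw [hD, Finset.lcm_eq_zero_iff] at h
      obtain ⟨i, -, hi⟩ := h
      exact absurd hi ((hd i).ne')
    · exact h
  haveI : NeZero D := ⟨hD0.ne'⟩
  haveI : ∀ i, NeZero (d i) := fun i => ⟨(hd i).ne'⟩
  have hsumw : ∑ i, (w i : ℚ) = (D : ℚ) := by
    have h1 : ∀ i : Fin (n + 1), (w i : ℚ) = (D : ℚ) * (1 / (d i : ℚ)) := fun i => by
      rw [hw i, Nat.cast_div (hdD i) (by exact_mod_cast (hd i).ne')]
      ring
    rw [Finset.sum_congr rfl fun i _ => h1 i, ← Finset.mul_sum, hsum, mul_one]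
  have hsumwN : ∑ i, w i = D := by exact_mod_cast hsumw
  have hsumwZ : ∑ i, (w i : ℤ) = (D : ℤ) := by exact_mod_cast hsumw
  have hwdZ : ∀ i, (w i : ℤ) * (d i : ℤ) = (D : ℤ) := fun i => by exact_mod_cast hwd i
  -- membership in Mw
  have hMwMem : ∀ a : Fin (n + 1) → ℤ, a ∈ Mw ↔ ∑ i, (w i : ℤ) * a i = 0 := fun a => by
    rw [← SetLike.mem_coe, hMw]; exact Iff.rfl
  -- the generators
  set v : Fin (n + 1) → (Fin (n + 1) → ℤ) :=
    fun i j => (if j = i then (d i : ℤ) else 0) - 1 with hv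
  have hMB' : MB = AddSubgroup.closure (Set.range v) := hMB
  have hvMw : ∀ i, v i ∈ Mw := fun i => by
    rw [hMwMem]
    have h1 : ∑ j, (w j : ℤ) * v i j
        = (∑ j, (if j = i then (w j : ℤ) * (d i : ℤ) else 0)) - ∑ j, (w j : ℤ) := by
      rw [← Finset.sum_sub_distrib]
      refine Finset.sum_congr rfl fun j _ => ?_
      by_cases h : j = i <;> simp [hv, h] <;> ring
    rw [h1, Finset.sum_ite_eq' Finset.univ i (fun j => (w j : ℤ) * (d i : ℤ))]
    simp only [Finset.mem_univ, if_true]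
    rw [hwdZ i, hsumwZ, sub_self]
  have hMBle : MB ≤ Mw := by
    rw [hMB']
    exact (AddSubgroup.closure_le Mw).mpr (by rintro x ⟨i, rfl⟩; exact hvMw i)
  -- the reduction hom
  let ψ : (Fin (n + 1) → ℤ) →+ (∀ i, ZMod (d i)) :=
    { toFun := fun a i => ((a i : ℤ) : ZMod (d i))
      map_zero' := by funext i; simp
      map_add' := fun a b => by funext i; simp [Pi.add_apply] }
  have hψ : ∀ (a : Fin (n + 1) → ℤ) (i), ψ a i = ((a i : ℤ) : ZMod (d i)) := fun _ _ => rfl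
  have hψker : ∀ a : Fin (n + 1) → ℤ, a ∈ ψ.ker ↔ ∀ i, (d i : ℤ) ∣ a i := fun a => by
    rw [AddMonoidHom.mem_ker, funext_iff]
    refine forall_congr' fun i => ?_
    simp only [Pi.zero_apply]
    exact ZMod.intCast_zmod_eq_zero_iff_dvd _ _
  -- ψ.ker ⊓ Mw ≤ MB
  have hKle : ψ.ker ⊓ Mw ≤ MB := by
    intro a ha
    obtain ⟨hk0, hm0⟩ := AddSubgroup.mem_inf.mp ha
    have hk := (hψker a).mp hk0
    have hm := (hMwMem a).mp hm0
    choose c hc using fun i => hk i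
    have hcsum : ∑ i, c i = 0 := by
      have h1 : ∑ i, (w i : ℤ) * a i = (D : ℤ) * ∑ i, c i := by
        rw [Finset.mul_sum]
        refine Finset.sum_congr rfl fun i _ => ?_
        rw [hc i, ← hwdZ i]; ring
      rw [hm] at h1
      have hDz : (D : ℤ) ≠ 0 := by exact_mod_cast hD0.ne'
      exact (mul_eq_zero.mp h1.symm).resolve_left hDz
    have ha : a = ∑ i, c i • v i := by
      funext j
      rw [Finset.sum_apply]
      have h2 : ∀ i : Fin (n + 1), (c i • v i) j
          = (if j = i then c i * (d i : ℤ) else 0) - c i := fun i => by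
        by_cases h : j = i <;> simp [hv, h] <;> ring
      rw [Finset.sum_congr rfl fun i _ => h2 i, Finset.sum_sub_distrib,
        Finset.sum_ite_eq Finset.univ j (fun i => c i * (d i : ℤ))]
      simp only [Finset.mem_univ, if_true]
      rw [hcsum, hc j]
      ring
    rw [hMB', ha]
    exact AddSubgroup.sum_mem _ fun i _ =>
      AddSubgroup.zsmul_mem _ (AddSubgroup.subset_closure (Set.mem_range_self i)) _
  -- the character χ
  have hdw : ∀ i, ((d i : ℤ) • ((w i : ℕ) : ZMod D)) = 0 := fun i => by
    rw [zsmul_eq_mul, Int.cast_natCast, ← Nat.cast_mul, mul_comm (d i) (w i), hwd i,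
      ZMod.natCast_self]
  let lw : ∀ i, ZMod (d i) →+ ZMod D := fun i =>
    ZMod.lift (d i) ⟨zmultiplesHom (ZMod D) ((w i : ℕ) : ZMod D), by
      simpa using hdw i⟩
  have hlw : ∀ i (z : ℤ), lw i ((z : ZMod (d i))) = z • ((w i : ℕ) : ZMod D) :=
    fun i z => ZMod.lift_coe _ _ _
  let χ : (∀ i, ZMod (d i)) →+ ZMod D :=
    ∑ i, (lw i).comp (Pi.evalAddMonoidHom (fun i => ZMod (d i)) i)
  have hχ : ∀ r, χ r = ∑ i, lw i (r i) := fun r => by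
    simp [χ, AddMonoidHom.finset_sum_apply]
  have hχψ : ∀ a : Fin (n + 1) → ℤ,
      χ (ψ a) = (((∑ i, (w i : ℤ) * a i : ℤ) : ℤ) : ZMod D) := fun a => by
    rw [hχ]
    push_cast
    refine Finset.sum_congr rfl fun i _ => ?_
    rw [hψ, hlw i (a i), zsmul_eq_mul]
    push_cast
    ring
  -- Bezout
  have hbez : ∃ c : Fin (n + 1) → ℤ, ∑ i, c i * (w i : ℤ) = 1 := by
    obtain ⟨c, hc⟩ := bezout_finset Finset.univ (fun i => (w i : ℤ))
    set g : ℤ := Finset.univ.gcd (fun i => (w i : ℤ)) with hg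
    have hgdvd : ∀ i, g.natAbs ∣ w i := fun i => by
      have := Finset.gcd_dvd (Finset.mem_univ i) (f := fun i => (w i : ℤ))
      rw [← hg] at this
      have h2 : g.natAbs ∣ ((w i : ℤ)).natAbs := Int.natAbs_dvd_natAbs.mpr this
      simpa using h2
    have hg0 : g.natAbs ≠ 0 := by
      intro h0
      have := hgdvd 0
      rw [h0] at this
      have hw0 : w 0 = 0 := Nat.eq_zero_of_zero_dvd this
      have : d 0 ∣ D := hdD 0
      have := hwd 0
      rw [hw0, zero_mul] at this
      exact hD0.ne' this.symm
    have hgn1 : g.natAbs = 1 := by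
      set gn := g.natAbs with hgn
      have hgnD : gn ∣ D := (hgdvd 0).trans ⟨d 0, (hwd 0).symm⟩
      have hdle : ∀ i, d i ∣ D / gn := fun i => by
        obtain ⟨t, ht⟩ := hgdvd i
        refine ⟨t, ?_⟩
        rw [← Nat.mul_div_cancel (Nat.pos_of_ne_zero hg0) (m := d i * t)]
        rw [← Nat.div_mul_cancel hgnD]
        congr 1
        rw [Nat.div_mul_cancel hgnD, ← hwd i, ht]
        ring
      have hDdvd : D ∣ D / gn := by
        rw [hD]
        exact Finset.lcm_dvd fun i _ => hD ▸ hdle i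
      have hdvdD : D / gn ∣ D := Nat.div_dvd_of_dvd hgnD
      have hEq : D / gn = D := Nat.dvd_antisymm hdvdD hDdvd
      have h5 : gn * (D / gn) = 1 * (D / gn) := by
        rw [Nat.mul_div_cancel' hgnD, one_mul, hEq]
      have h6 : 0 < D / gn := by rw [hEq]; exact hD0
      exact Nat.eq_of_mul_eq_mul_right h6 h5
    rcases Int.natAbs_eq_iff.mp hgn1 with h1 | h1
    · exact ⟨c, by rw [hc, h1]; norm_num⟩
    · refine ⟨-c, ?_⟩
      have : ∑ i, (-c) i * (w i : ℤ) = -(∑ i, c i * (w i : ℤ)) := by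
        rw [← Finset.sum_neg_distrib]
        exact Finset.sum_congr rfl fun i _ => by simp only [Pi.neg_apply]; ring
      rw [this, hc, h1]
      norm_num
  -- χ surjective
  have hχsurj : Function.Surjective χ := by
    obtain ⟨c, hc⟩ := hbez
    intro x
    refine ⟨ψ (fun i => ((x.val : ℤ)) * c i), ?_⟩
    rw [hχψ]
    have h1 : ∑ i, (w i : ℤ) * ((x.val : ℤ) * c i)
        = (x.val : ℤ) * ∑ i, c i * (w i : ℤ) := by
      rw [Finset.mul_sum]
      exact Finset.sum_congr rfl fun i _ => by ring
    rw [h1, hc, mul_one, Int.cast_natCast, ZMod.natCast_val, ZMod.cast_id]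
  -- Mw.map ψ = χ.ker
  have hmap : Mw.map ψ = χ.ker := by
    ext r
    constructor
    · rintro ⟨a, ha, rfl⟩
      rw [AddMonoidHom.mem_ker, hχψ, (hMwMem a).mp ha]
      simp
    · intro hr
      rw [AddMonoidHom.mem_ker] at hr
      set z : Fin (n + 1) → ℤ := fun i => ((r i).val : ℤ) with hz
      have hrz : ∀ i, ((z i : ZMod (d i))) = r i := fun i => by
        simp only [hz, Int.cast_natCast]
        exact ZMod.natCast_rightInverse (r i)
      have hψz : ψ z = r := funext fun i => hrz i
      have hdvd : (D : ℤ) ∣ ∑ i, (w i : ℤ) * z i := by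
        rw [← ZMod.intCast_zmod_eq_zero_iff_dvd, ← hχψ, hψz]
        exact hr
      obtain ⟨k, hk⟩ := hdvd
      set a : Fin (n + 1) → ℤ := fun i => z i - (if i = 0 then k * (d 0 : ℤ) else 0) with hA
      refine AddSubgroup.mem_map.mpr ⟨a, ?_, ?_⟩
      · rw [hMwMem]
        have h1 : ∑ i, (w i : ℤ) * a i
            = (∑ i, (w i : ℤ) * z i) - ∑ i, (if i = 0 then (w i : ℤ) * (k * (d 0 : ℤ)) else 0) := by
          rw [← Finset.sum_sub_distrib]
          refine Finset.sum_congr rfl fun i _ => ?_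
          by_cases h : i = 0 <;> simp [hA, h] <;> ring
        rw [h1, Finset.sum_ite_eq' Finset.univ (0 : Fin (n + 1))
          (fun i => (w i : ℤ) * (k * (d 0 : ℤ)))]
        simp only [Finset.mem_univ, if_true]
        rw [hk]
        have : (w 0 : ℤ) * (k * (d 0 : ℤ)) = (D : ℤ) * k := by
          rw [← hwdZ 0]; ring
        rw [this]
        ring
      · funext i
        rw [hψ]
        by_cases h : i = 0
        · subst h
          have h0 : (((k * (d 0 : ℤ)) : ℤ) : ZMod (d 0)) = 0 := by
            rw [ZMod.intCast_zmod_eq_zero_iff_dvd]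
            exact ⟨k, by ring⟩
          calc ((a 0 : ℤ) : ZMod (d 0))
              = ((z 0 : ℤ) : ZMod (d 0)) - ((k * (d 0 : ℤ) : ℤ) : ZMod (d 0)) := by
                rw [hA]; push_cast; simp
            _ = r 0 := by rw [h0, sub_zero]; exact hrz 0
        · simp only [hA, if_neg h, sub_zero]
          exact hrz i
  -- MB.map ψ = closure {u}
  let u : ∀ i, ZMod (d i) := fun i => (-1 : ZMod (d i))
  have hmapB : MB.map ψ = AddSubgroup.closure {u} := by
    rw [hMB', AddMonoidHom.map_closure]
    congr 1
    rw [← Set.range_comp]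
    have h1 : ∀ i, (ψ ∘ v) i = u := fun i => funext fun j => by
      by_cases h : j = i
      · subst h
        show (((if j = j then (d j : ℤ) else 0) - 1 : ℤ) : ZMod (d j)) = -1
        rw [if_pos rfl]
        push_cast
        simp [ZMod.natCast_self]
      · show (((if j = i then (d i : ℤ) else 0) - 1 : ℤ) : ZMod (d j)) = -1
        rw [if_neg h]
        push_cast
        ring
    rw [funext h1]
    exact Set.range_const
  have hDu : ((D : ℤ)) • u = 0 := by
    funext i
    have h2 : ((D : ℕ) : ZMod (d i)) = 0 := by
      rw [ZMod.natCast_eq_zero_iff]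
      exact hdD i
    show ((D : ℤ)) • (-1 : ZMod (d i)) = 0
    rw [zsmul_eq_mul, Int.cast_natCast, h2]
    ring
  let θ : ZMod D →+ (∀ i, ZMod (d i)) :=
    ZMod.lift D ⟨zmultiplesHom _ u, by simpa using hDu⟩
  have hθ : ∀ z : ℤ, θ ((z : ZMod D)) = z • u := fun z => ZMod.lift_coe _ _ _
  have hθinj : Function.Injective θ := by
    rw [injective_iff_map_eq_zero]
    intro x hx
    have hxv : x = ((x.val : ℤ) : ZMod D) := by
      rw [Int.cast_natCast]
      exact (ZMod.natCast_rightInverse x).symm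
    rw [hxv] at hx ⊢
    rw [hθ] at hx
    have h3 : ∀ i, d i ∣ x.val := fun i => by
      have h4 := congrFun hx i
      rw [Pi.smul_apply, Pi.zero_apply] at h4
      have h5 : ((x.val : ℤ)) • (u i) = -(((x.val : ℤ)) : ZMod (d i)) := by
        show ((x.val : ℤ)) • (-1 : ZMod (d i)) = _
        rw [zsmul_eq_mul]
        ring
      rw [h5, neg_eq_zero, ZMod.intCast_zmod_eq_zero_iff_dvd] at h4
      exact_mod_cast h4
    have h6 : D ∣ x.val := by
      have h7 := Finset.lcm_dvd (s := Finset.univ) (f := d) fun i _ => h3 i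
      rwa [← hD] at h7
    rw [ZMod.intCast_zmod_eq_zero_iff_dvd]
    exact_mod_cast h6
  have hθrange : θ.range = AddSubgroup.closure {u} := by
    apply le_antisymm
    · rintro _ ⟨x, rfl⟩
      have hxv : x = ((x.val : ℤ) : ZMod D) := by
        rw [Int.cast_natCast]
        exact (ZMod.natCast_rightInverse x).symm
      rw [hxv, hθ]
      exact AddSubgroup.zsmul_mem _ (AddSubgroup.subset_closure (Set.mem_singleton u)) _
    · rw [AddSubgroup.closure_le]
      intro y hy
      rw [Set.mem_singleton_iff] at hy
      subst hy
      exact ⟨((1 : ℤ) : ZMod D), by rw [hθ, one_zsmul]⟩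
  have hcardB : Nat.card (MB.map ψ) = D := by
    rw [hmapB, ← hθrange]
    calc Nat.card θ.range = Nat.card (ZMod D) :=
          Nat.card_congr (AddMonoidHom.ofInjective hθinj).symm.toEquiv
      _ = D := Nat.card_zmod D
  -- assembly
  have h1 : ψ.ker.relIndex MB = D := by
    rw [AddSubgroup.relIndex_ker]
    exact hcardB
  have hχkerindex : χ.ker.index = D := by
    rw [AddSubgroup.index_ker, AddMonoidHom.range_eq_top.mpr hχsurj]
    rw [AddSubgroup.card_top]
    exact Nat.card_zmod D
  have hPi : Nat.card (∀ i, ZMod (d i)) = ∏ i, d i := by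
    rw [Nat.card_pi]
    exact Finset.prod_congr rfl fun i _ => Nat.card_zmod _
  have h2 : ψ.ker.relIndex Mw * D = ∏ i, d i := by
    have h8 := AddSubgroup.index_mul_card χ.ker
    rw [hχkerindex, hPi] at h8
    rw [AddSubgroup.relIndex_ker, hmap, mul_comm]
    exact h8
  have hKMB' : (ψ.ker ⊓ Mw).relIndex MB = ψ.ker.relIndex MB := by
    unfold AddSubgroup.relIndex
    congr 1
    ext x
    simp only [AddSubgroup.mem_addSubgroupOf, AddSubgroup.mem_inf]
    exact and_iff_left (hMBle x.2)
  have htower := AddSubgroup.relIndex_mul_relIndex (ψ.ker ⊓ Mw) MB Mw hKle hMBle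
  rw [hKMB', h1, AddSubgroup.inf_relIndex_right] at htower
  have hidx : MB.relIndex Mw * (D * D) = ∏ i, d i := by
    rw [← h2, ← htower]
    ring
  have hprod : 0 < ∏ i, d i := Finset.prod_pos fun i _ => hd i
  constructor
  · intro h0
    have h7 := hidx
    rw [show MB.relIndex Mw = (MB.addSubgroupOf Mw).index from rfl, h0, zero_mul] at h7
    exact absurd h7.symm hprod.ne'
  · exact hidx
end
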